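/- Let n ≥ 1 and let B be the standard simplex in Fin n → ℝ, let A be a nonempty finite type, γ a real with 0 < γ < 1, ĉ : B → A → ℝ a bounded cost function, and p a transition kernel on B. Let J̄ : B → ℝ be a continuous bounded Bellman solution for (ĉ, p). For each integer r ≥ 1, let Φ_r be a nearest-neighbor quantization map of resolution r, and let V_r : B → ℝ satisfy the quantized Bellman equation on G_r: for every g ∈ G_r, V_r g = min_{a ∈ A} (ĉ g a + γ · ∑_{g' ∈ G_r} (∑_{b' with Φ_r b' = g'} p g a b') · V_r g'). Then for every b ∈ B, lim_{r → ∞} V_r (Φ_r b) = J̄ b. -/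

import Mathlib

open scoped BigOperators

/-- The standard simplex in `Fin n → ℝ` (with the sup-norm of the Pi type). -/
def Simplex (n : ℕ) : Set (Fin n → ℝ) :=
  {b | (∀ i, 0 ≤ b i) ∧ ∑ i, b i = 1}

/-- The representative-belief grid of resolution `r`. -/
def Grid (n r : ℕ) : Set ↥(Simplex n) :=
  {b | ∀ i, ∃ k : ℕ, (b : Fin n → ℝ) i = (k : ℝ) / (r : ℝ)}

/-- `Φ` is a nearest-neighbor quantization map of resolution `r`. -/
def IsNearestNeighbor (n r : ℕ) (Φ : ↥(Simplex n) → ↥(Simplex n)) : Prop :=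
  ∀ b : ↥(Simplex n), Φ b ∈ Grid n r ∧
    ∀ g ∈ Grid n r, ‖(b : Fin n → ℝ) - (Φ b : Fin n → ℝ)‖ ≤ ‖(b : Fin n → ℝ) - (g : Fin n → ℝ)‖

/-- A transition kernel on state space `X` with action space `A`. -/
def IsKernel {X A : Type*} (p : X → A → X → ℝ) : Prop :=
  ∀ x a, (∀ x', 0 ≤ p x a x') ∧ (Function.support (p x a)).Finite ∧ (∑ᶠ x', p x a x') = 1

/-- `J` is a bounded Bellman solution for cost `c`, kernel `p`, discount `γ`. -/
def IsBellman {X A : Type*} [Fintype A] [Nonempty A] (γ : ℝ)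
    (c : X → A → ℝ) (p : X → A → X → ℝ) (J : X → ℝ) : Prop :=
  (∃ M, ∀ x, |J x| ≤ M) ∧
  ∀ x, J x = Finset.univ.inf' Finset.univ_nonempty
      (fun a => c x a + γ * ∑ᶠ x', p x a x' * J x')

-- helper A
lemma abs_inf'_sub_inf'_le {α : Type*} (s : Finset α) (hs : s.Nonempty) (f g : α → ℝ) (C : ℝ)
    (h : ∀ a ∈ s, |f a - g a| ≤ C) : |s.inf' hs f - s.inf' hs g| ≤ C := by
  rw [abs_sub_le_iff]
  constructor
  · obtain ⟨a, ha, hag⟩ := s.exists_mem_eq_inf' hs g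
    have h1 : s.inf' hs f ≤ f a := Finset.inf'_le _ ha
    have h2 := h a ha
    rw [abs_sub_le_iff] at h2
    linarith [h2.1]
  · obtain ⟨a, ha, hag⟩ := s.exists_mem_eq_inf' hs f
    have h1 : s.inf' hs g ≤ g a := Finset.inf'_le _ ha
    have h2 := h a ha
    rw [abs_sub_le_iff] at h2
    linarith [h2.2]

lemma simplex_coord_le_one {n : ℕ} {b : Fin n → ℝ} (hb : b ∈ Simplex n) (i : Fin n) : b i ≤ 1 := by
  have := hb.2
  calc b i ≤ ∑ j, b j := Finset.single_le_sum (fun j _ => hb.1 j) (Finset.mem_univ i)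
  _ = 1 := hb.2

lemma grid_finite (n r : ℕ) (hr : 1 ≤ r) : (Grid n r).Finite := by
  have hD : ∀ i : Fin n, ((fun k : ℕ => (k : ℝ) / r) '' (Set.Iic r)).Finite := fun i =>
    (Set.finite_Iic r).image _
  have hpi : (Set.pi Set.univ (fun i : Fin n => (fun k : ℕ => (k : ℝ) / r) '' (Set.Iic r))).Finite :=
    Set.Finite.pi fun i => hD i
  apply Set.Finite.of_finite_image (f := fun b : ↥(Simplex n) => (b : Fin n → ℝ))
  · apply hpi.subset
    rintro x ⟨b, hb, rfl⟩
    intro i _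
    obtain ⟨k, hk⟩ := hb i
    refine ⟨k, ?_, hk.symm⟩
    simp only [Set.mem_Iic]
    by_contra hkr
    push_neg at hkr
    have h1 : (b : Fin n → ℝ) i ≤ 1 := simplex_coord_le_one b.2 i
    rw [hk] at h1
    have hr0 : (0:ℝ) < r := by exact_mod_cast hr
    rw [div_le_one hr0] at h1
    exact_mod_cast absurd h1 (by push_neg; exact_mod_cast hkr)
  · exact fun a _ b _ h => Subtype.ext h

lemma grid_round (n r : ℕ) (hn : 1 ≤ n) (hr : 1 ≤ r) (b : ↥(Simplex n)) :
    ∃ g ∈ Grid n r, ∀ i, |(b : Fin n → ℝ) i - (g : Fin n → ℝ) i| ≤ 1 / r := by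
  have hr0 : (0:ℝ) < r := by exact_mod_cast hr
  have hbnn : ∀ i, 0 ≤ (b : Fin n → ℝ) i := b.2.1
  set u : Fin n → ℕ := fun i => ⌊(r : ℝ) * (b : Fin n → ℝ) i⌋₊ with hu
  have hunn : ∀ i, (u i : ℝ) ≤ r * (b : Fin n → ℝ) i := fun i =>
    Nat.floor_le (mul_nonneg hr0.le (hbnn i))
  have hult : ∀ i, r * (b : Fin n → ℝ) i < u i + 1 := fun i => Nat.lt_floor_add_one _
  have hsum : ∑ i, (r : ℝ) * (b : Fin n → ℝ) i = r := by
    rw [← Finset.mul_sum, b.2.2, mul_one]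
  set S : ℕ := ∑ i, u i with hS
  have hSle : S ≤ r := by
    have : (S : ℝ) ≤ r := by
      rw [hS]; push_cast
      calc ∑ i, (u i : ℝ) ≤ ∑ i, (r : ℝ) * (b : Fin n → ℝ) i := Finset.sum_le_sum fun i _ => hunn i
      _ = r := hsum
    exact_mod_cast this
  have hrlt : r < S + n := by
    have : (r : ℝ) < S + n := by
      rw [hS]
      calc (r:ℝ) = ∑ i, (r : ℝ) * (b : Fin n → ℝ) i := hsum.symm
      _ < ∑ i, ((u i : ℝ) + 1) := Finset.sum_lt_sum_of_nonempty
          (Finset.univ_nonempty_iff.2 ⟨⟨0, hn⟩⟩) (fun i _ => hult i)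
      _ = (∑ i, (u i : ℝ)) + n := by rw [Finset.sum_add_distrib]; simp [Finset.card_univ]
      _ = _ := by push_cast; ring
    exact_mod_cast this
  set d : ℕ := r - S with hd
  have hdn : d < n := by omega
  set χ : Fin n → ℕ := fun i => if (i : ℕ) < d then 1 else 0 with hχ
  have hχsum : ∑ i, χ i = d := by
    rw [hχ]
    simp only
    rw [← Finset.sum_filter]
    simp only [Finset.sum_const, smul_eq_mul, mul_one]
    have : Finset.univ.filter (fun i : Fin n => (i : ℕ) < d) = Finset.Iio ⟨d, hdn⟩ := by
      ext i; simp [Fin.lt_def]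
    rw [this, Fin.card_Iio]
  have hnat : ∑ i, (u i + χ i) = r := by
    rw [Finset.sum_add_distrib, ← hS, hχsum]; omega
  set gv : Fin n → ℝ := fun i => ((u i + χ i : ℕ) : ℝ) / r with hgv
  have hgmem : gv ∈ Simplex n := by
    constructor
    · intro i; positivity
    · rw [hgv]
      simp only
      rw [← Finset.sum_div, ← Nat.cast_sum, hnat, div_self (ne_of_gt hr0)]
  refine ⟨⟨gv, hgmem⟩, fun i => ⟨u i + χ i, rfl⟩, fun i => ?_⟩
  show |(b : Fin n → ℝ) i - gv i| ≤ 1 / r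
  rw [hgv]
  have h1 : |(r:ℝ) * (b : Fin n → ℝ) i - (u i + χ i : ℕ)| ≤ 1 := by
    have hχi : (χ i : ℝ) = 0 ∨ (χ i : ℝ) = 1 := by
      rw [hχ]; by_cases h : (i:ℕ) < d <;> simp [h]
    rw [abs_le]
    push_cast
    rcases hχi with h | h <;> rw [h] <;> constructor <;> nlinarith [hunn i, hult i]
  have heq : (b : Fin n → ℝ) i - ((u i + χ i : ℕ) : ℝ) / r
      = ((r:ℝ) * (b : Fin n → ℝ) i - (u i + χ i : ℕ)) / r := by
    field_simp
  rw [heq, abs_div, abs_of_pos hr0, div_le_div_iff_of_pos_right hr0]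
  exact h1

-- regrouping
lemma regroup {X Y : Type*} (q : X → ℝ) (hq : (Function.support q).Finite)
    (Φ : X → Y) (G : Set Y) (hΦG : ∀ x, Φ x ∈ G) (W : Y → ℝ) :
    ∑ᶠ (g') (_ : g' ∈ G), (∑ᶠ (b') (_ : Φ b' = g'), q b') * W g'
      = ∑ᶠ b', q b' * W (Φ b') := by
  classical
  set S : Finset X := hq.toFinset with hSdef
  have hSsupp : Function.support q ⊆ ↑S := by simp [hSdef]
  set T : Finset Y := S.image Φ with hTdef
  have hinner : ∀ g' : Y, (∑ᶠ (b') (_ : Φ b' = g'), q b')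
      = ∑ b' ∈ S.filter (fun b' => Φ b' = g'), q b' := by
    intro g'
    apply finsum_mem_eq_sum_of_inter_support_eq
    ext x
    simp only [Set.mem_inter_iff, Set.mem_setOf_eq, Finset.coe_filter, Function.mem_support,
      Set.Finite.mem_toFinset, hSdef, Finset.mem_coe, Finset.mem_filter]
    show (Φ x = g' ∧ q x ≠ 0) ↔ _
    tauto
  have houter : (∑ᶠ (g') (_ : g' ∈ G), (∑ᶠ (b') (_ : Φ b' = g'), q b') * W g')
      = ∑ g' ∈ T, (∑ᶠ (b') (_ : Φ b' = g'), q b') * W g' := by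
    apply finsum_mem_eq_sum_of_inter_support_eq
    ext g'
    simp only [Set.mem_inter_iff, Function.mem_support, Finset.mem_coe]
    constructor
    · rintro ⟨hG, hne⟩
      refine ⟨?_, hne⟩
      rw [hinner] at hne
      have : ∃ b' ∈ S.filter (fun b' => Φ b' = g'), q b' ≠ 0 := by
        by_contra hc
        push_neg at hc
        exact (mul_ne_zero_iff.1 hne).1 (Finset.sum_eq_zero hc)
      obtain ⟨b', hb', _⟩ := this
      rw [Finset.mem_filter] at hb'
      rw [hTdef, Finset.mem_image]
      exact ⟨b', hb'.1, hb'.2⟩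
    · rintro ⟨hT, hne⟩
      rw [hTdef, Finset.mem_image] at hT
      obtain ⟨b', _, rfl⟩ := hT
      exact ⟨hΦG b', hne⟩
  rw [houter]
  have hrhs : (∑ᶠ b', q b' * W (Φ b')) = ∑ b' ∈ S, q b' * W (Φ b') := by
    apply finsum_eq_sum_of_support_subset
    intro x hx
    apply hSsupp
    simp only [Function.mem_support] at hx ⊢
    exact fun h => hx (by rw [h, zero_mul])
  rw [hrhs]
  rw [← Finset.sum_fiberwise_of_maps_to (g := Φ) (t := T)
    (fun x hx => Finset.mem_image_of_mem Φ hx) (fun b' => q b' * W (Φ b'))]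
  apply Finset.sum_congr rfl
  intro g' _
  rw [hinner, Finset.sum_mul]
  apply Finset.sum_congr rfl
  intro b' hb'
  rw [Finset.mem_filter] at hb'
  rw [hb'.2]

-- bound on weighted finsum
lemma finsum_weight_bound {X : Type*} (q : X → ℝ) (hq : (Function.support q).Finite)
    (hq0 : ∀ x, 0 ≤ q x) (hq1 : (∑ᶠ x, q x) = 1) (x : X → ℝ) (C : ℝ)
    (hx : ∀ b, |x b| ≤ C) : |∑ᶠ b, q b * x b| ≤ C := by
  classical
  set S : Finset X := hq.toFinset with hSdef
  have h1 : (∑ᶠ b, q b * x b) = ∑ b ∈ S, q b * x b := by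
    apply finsum_eq_sum_of_support_subset
    intro b hb
    simp only [Function.mem_support] at hb
    simp only [hSdef, Finset.coe_sort_coe, Set.Finite.coe_toFinset, Function.mem_support]
    exact fun h => hb (by rw [h, zero_mul])
  have h2 : (∑ᶠ b, q b) = ∑ b ∈ S, q b := by
    apply finsum_eq_sum_of_support_subset
    simp [hSdef]
  rw [h1]
  calc |∑ b ∈ S, q b * x b| ≤ ∑ b ∈ S, |q b * x b| := Finset.abs_sum_le_sum_abs _ _
  _ ≤ ∑ b ∈ S, q b * C := by
      apply Finset.sum_le_sum
      intro b _
      rw [abs_mul, abs_of_nonneg (hq0 b)]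
      exact mul_le_mul_of_nonneg_left (hx b) (hq0 b)
  _ = (∑ b ∈ S, q b) * C := by rw [Finset.sum_mul]
  _ = C := by rw [← h2, hq1, one_mul]


lemma simplex_compactSpace (n : ℕ) : CompactSpace ↥(Simplex n) := by
  rw [← isCompact_iff_compactSpace]
  apply Metric.isCompact_of_isClosed_isBounded
  · have h1 : IsClosed {b : Fin n → ℝ | ∀ i, 0 ≤ b i} := by
      have : {b : Fin n → ℝ | ∀ i, 0 ≤ b i} = ⋂ i, {b : Fin n → ℝ | 0 ≤ b i} := by
        ext b; simp
      rw [this]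
      exact isClosed_iInter fun i => isClosed_le continuous_const (continuous_apply i)
    have h2 : IsClosed {b : Fin n → ℝ | ∑ i, b i = 1} :=
      isClosed_eq (by continuity) continuous_const
    have : Simplex n = {b : Fin n → ℝ | ∀ i, 0 ≤ b i} ∩ {b : Fin n → ℝ | ∑ i, b i = 1} := rfl
    rw [this]
    exact h1.inter h2
  · apply Bornology.IsBounded.subset (Metric.isBounded_closedBall (x := (0 : Fin n → ℝ)) (r := 1))
    intro b hb
    simp only [Metric.mem_closedBall, dist_zero_right]
    apply pi_norm_le_iff_of_nonneg zero_le_one |>.2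
    intro i
    rw [Real.norm_eq_abs, abs_of_nonneg (hb.1 i)]
    calc b i ≤ ∑ j, b j := Finset.single_le_sum (fun j _ => hb.1 j) (Finset.mem_univ i)
    _ = 1 := hb.2

lemma key_bound (n r : ℕ) (hr : 1 ≤ r)
    {A : Type*} [Fintype A] [Nonempty A]
    (γ : ℝ) (hγ0 : 0 < γ) (hγ1 : γ < 1)
    (c : ↥(Simplex n) → A → ℝ)
    (p : ↥(Simplex n) → A → ↥(Simplex n) → ℝ) (hp : IsKernel p)
    (Jbar : ↥(Simplex n) → ℝ)
    (hJbar : ∀ x, Jbar x = Finset.univ.inf' Finset.univ_nonempty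
      (fun a => c x a + γ * ∑ᶠ x', p x a x' * Jbar x'))
    (Φr : ↥(Simplex n) → ↥(Simplex n)) (hΦG : ∀ b, Φr b ∈ Grid n r)
    (Vr : ↥(Simplex n) → ℝ)
    (hVr : ∀ g ∈ Grid n r,
      Vr g = Finset.univ.inf' Finset.univ_nonempty
        (fun a => c g a + γ * ∑ᶠ (g') (_ : g' ∈ Grid n r),
          (∑ᶠ (b') (_ : Φr b' = g'), p g a b') * Vr g'))
    (ε' : ℝ) (hε' : ∀ b', |Jbar (Φr b') - Jbar b'| ≤ ε') :
    ∀ g ∈ Grid n r, |Vr g - Jbar g| ≤ γ * ε' / (1 - γ) := by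
  intro g hg
  classical
  set Gr : Finset ↥(Simplex n) := (grid_finite n r hr).toFinset with hGr
  have hmemGr : ∀ x, x ∈ Gr ↔ x ∈ Grid n r := fun x => (grid_finite n r hr).mem_toFinset
  have hne : Gr.Nonempty := ⟨g, (hmemGr g).2 hg⟩
  set e : ℝ := Gr.sup' hne (fun g' => |Vr g' - Jbar g'|) with he
  -- Step 1
  have step1 : ∀ g' ∈ Grid n r, |Vr g' - Jbar g'| ≤ γ * (e + ε') := by
    intro g' hg'
    rw [hVr g' hg', hJbar g']
    apply abs_inf'_sub_inf'_le
    intro a _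
    have hker := hp g' a
    have hQ : (∑ᶠ (g'') (_ : g'' ∈ Grid n r),
        (∑ᶠ (b') (_ : Φr b' = g''), p g' a b') * Vr g'')
        = ∑ᶠ b', p g' a b' * Vr (Φr b') :=
      regroup (p g' a) hker.2.1 Φr (Grid n r) hΦG Vr
    rw [hQ]
    have hsub : (∑ᶠ b', p g' a b' * Vr (Φr b')) - (∑ᶠ b', p g' a b' * Jbar b')
        = ∑ᶠ b', p g' a b' * (Vr (Φr b') - Jbar b') := by
      rw [← finsum_sub_distrib
        (hker.2.1.subset (fun x hx => by
          simp only [Function.mem_support] at hx ⊢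
          exact fun h => hx (by rw [h, zero_mul])))
        (hker.2.1.subset (fun x hx => by
          simp only [Function.mem_support] at hx ⊢
          exact fun h => hx (by rw [h, zero_mul])))]
      exact finsum_congr fun b' => by ring
    have habs : |(∑ᶠ b', p g' a b' * (Vr (Φr b') - Jbar b'))| ≤ e + ε' := by
      apply finsum_weight_bound (p g' a) hker.2.1 hker.1 hker.2.2
      intro b'
      calc |Vr (Φr b') - Jbar b'|
          ≤ |Vr (Φr b') - Jbar (Φr b')| + |Jbar (Φr b') - Jbar b'| := abs_sub_le _ _ _
      _ ≤ e + ε' := add_le_add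
          (Finset.le_sup' (fun g'' => |Vr g'' - Jbar g''|) ((hmemGr _).2 (hΦG b')))
          (hε' b')
    have hring : (c g' a + γ * ∑ᶠ b', p g' a b' * Vr (Φr b'))
        - (c g' a + γ * ∑ᶠ x', p g' a x' * Jbar x')
        = γ * ((∑ᶠ b', p g' a b' * Vr (Φr b')) - (∑ᶠ b', p g' a b' * Jbar b')) := by ring
    calc |(c g' a + γ * ∑ᶠ b', p g' a b' * Vr (Φr b'))
        - (c g' a + γ * ∑ᶠ x', p g' a x' * Jbar x')|
        = γ * |(∑ᶠ b', p g' a b' * Vr (Φr b')) - (∑ᶠ b', p g' a b' * Jbar b')| := by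
          rw [hring, abs_mul, abs_of_pos hγ0]
    _ = γ * |(∑ᶠ b', p g' a b' * (Vr (Φr b') - Jbar b'))| := by rw [hsub]
    _ ≤ γ * (e + ε') := mul_le_mul_of_nonneg_left habs hγ0.le
  -- Step 2
  have step2 : e ≤ γ * (e + ε') := by
    obtain ⟨g', hg', hge⟩ := Gr.exists_mem_eq_sup' hne (fun g'' => |Vr g'' - Jbar g''|)
    have h' : e = |Vr g' - Jbar g'| := by rw [he]; exact hge
    calc e = |Vr g' - Jbar g'| := h'
    _ ≤ γ * (e + ε') := step1 g' ((hmemGr g').1 hg')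
  have step3 : e ≤ γ * ε' / (1 - γ) := by
    rw [le_div_iff₀ (by linarith)]
    nlinarith [step2]
  calc |Vr g - Jbar g| ≤ e := by
        rw [he]; exact Finset.le_sup' (fun g'' => |Vr g'' - Jbar g''|) ((hmemGr g).2 hg)
  _ ≤ γ * ε' / (1 - γ) := step3

/-- Asymptotic (conjectured) optimality: the quantized Bellman solutions
evaluated at the quantized beliefs converge pointwise to the (continuous)
Bellman solution of the belief MDP as the quantization resolution increases. -/
theorem asymptotic_conjectured_optimality
    (n : ℕ) (hn : 1 ≤ n)
    {A : Type*} [Fintype A] [Nonempty A]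
    (γ : ℝ) (hγ0 : 0 < γ) (hγ1 : γ < 1)
    (c : ↥(Simplex n) → A → ℝ) (hc : ∃ M, ∀ b a, |c b a| ≤ M)
    (p : ↥(Simplex n) → A → ↥(Simplex n) → ℝ) (hp : IsKernel p)
    (Jbar : ↥(Simplex n) → ℝ) (hJcont : Continuous Jbar)
    (hJbar : IsBellman γ c p Jbar)
    (Φ : ℕ → ↥(Simplex n) → ↥(Simplex n))
    (hΦ : ∀ r, 1 ≤ r → IsNearestNeighbor n r (Φ r))
    (V : ℕ → ↥(Simplex n) → ℝ)
    (hV : ∀ r, 1 ≤ r → ∀ g ∈ Grid n r,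
      V r g = Finset.univ.inf' Finset.univ_nonempty
        (fun a => c g a + γ * ∑ᶠ (g') (_ : g' ∈ Grid n r),
          (∑ᶠ (b') (_ : Φ r b' = g'), p g a b') * V r g')) :
    ∀ b : ↥(Simplex n),
      Filter.Tendsto (fun r => V r (Φ r b)) Filter.atTop (nhds (Jbar b)) := by
  intro b
  haveI := simplex_compactSpace n
  have hJu : UniformContinuous Jbar := CompactSpace.uniformContinuous_of_continuous hJcont
  rw [Metric.tendsto_atTop]
  intro ε hε
  have h1γ : (0:ℝ) < 1 - γ := by linarith
  set ε' : ℝ := ε * (1 - γ) / 2 with hε'def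
  have hε'pos : 0 < ε' := by rw [hε'def]; positivity
  obtain ⟨δ, hδ0, hδ⟩ := Metric.uniformContinuous_iff.1 hJu ε' hε'pos
  obtain ⟨N0, hN0⟩ := exists_nat_gt (1 / δ)
  refine ⟨max N0 1, fun r hrN => ?_⟩
  have hr1 : 1 ≤ r := le_trans (le_max_right _ _) hrN
  have hr0 : (0:ℝ) < r := by exact_mod_cast hr1
  have hrδ : 1 / (r:ℝ) < δ := by
    have hNr : (N0 : ℝ) ≤ r := by exact_mod_cast le_trans (le_max_left _ _) hrN
    have : 1 / δ < (r:ℝ) := lt_of_lt_of_le hN0 hNr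
    rw [div_lt_iff₀ hr0]
    rw [div_lt_iff₀ hδ0] at this
    nlinarith
  have hqd : ∀ b' : ↥(Simplex n), dist (Φ r b') b' < δ := by
    intro b'
    obtain ⟨g, hgG, hgb⟩ := grid_round n r hn hr1 b'
    have h1 : ‖(b' : Fin n → ℝ) - (Φ r b' : Fin n → ℝ)‖ ≤ 1 / r := by
      calc ‖(b' : Fin n → ℝ) - (Φ r b' : Fin n → ℝ)‖
          ≤ ‖(b' : Fin n → ℝ) - (g : Fin n → ℝ)‖ := (hΦ r hr1 b').2 g hgG
      _ ≤ 1 / r := by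
          apply pi_norm_le_iff_of_nonneg (by positivity) |>.2
          intro i
          rw [Pi.sub_apply, Real.norm_eq_abs]
          exact hgb i
    have hdist : dist (Φ r b') b' = ‖(b' : Fin n → ℝ) - (Φ r b' : Fin n → ℝ)‖ := by
      rw [Subtype.dist_eq, dist_eq_norm, norm_sub_rev]
    rw [hdist]
    exact lt_of_le_of_lt h1 hrδ
  have hJq : ∀ b', |Jbar (Φ r b') - Jbar b'| ≤ ε' := by
    intro b'
    have := hδ (hqd b')
    rw [Real.dist_eq] at this
    exact this.le
  have hkey := key_bound n r hr1 γ hγ0 hγ1 c p hp Jbar hJbar.2 (Φ r)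
    (fun b'' => (hΦ r hr1 b'').1) (V r) (hV r hr1) ε' hJq
  rw [Real.dist_eq]
  have hchain : |V r (Φ r b) - Jbar b| ≤ γ * ε' / (1 - γ) + ε' := by
    calc |V r (Φ r b) - Jbar b|
        ≤ |V r (Φ r b) - Jbar (Φ r b)| + |Jbar (Φ r b) - Jbar b| := abs_sub_le _ _ _
    _ ≤ γ * ε' / (1 - γ) + ε' := add_le_add (hkey (Φ r b) (hΦ r hr1 b).1) (hJq b)
  have hval : γ * ε' / (1 - γ) = γ * ε / 2 := by
    rw [hε'def]
    field_simp
  rw [hval, hε'def] at hchain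
  nlinarith
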